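/- Let Ā ∈ {0,*}^{n×n} and let X_F ⊆ {x_1,…,x_n} be a set of state vertices. Let Ī_{X_F} be the structured matrix stacking the unit-pattern rows ē_i for x_i ∈ X_F. Then grank[Ā; Ī_{X_F}] − grank Ā equals the maximum, over all maximum matchings M of the bipartite graph B(Ā), of the number of vertices of X_F that are right-unmatched by M. -/

import Mathlib

noncomputable section
open Matrix

/-- Realization of a structured (zero/nonzero pattern) matrix: the vector `θ` of
values of the free parameters at the `*` positions, zeros elsewhere. -/
def toMat {α β : Type*} (P : α → β → Bool)
    (θ : {ij : α × β // P ij.1 ij.2 = true} → ℝ) : Matrix α β ℝ :=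
  Matrix.of fun i j => if h : P i j = true then θ ⟨(i, j), h⟩ else 0

/-- Generic rank of a structured matrix: the maximum rank over all realizations. -/
noncomputable def grank {α β : Type*} [Fintype β] (P : α → β → Bool) : ℕ :=
  sSup {r | ∃ θ, (toMat P θ).rank = r}

/-- A matching of the bipartite graph `B(P)`: a set of edges (i,j) with `P j i = *`
(from column vertex i to row vertex j) with pairwise distinct tails and pairwise
distinct heads. -/
def IsMatching {α : Type*} (P : α → α → Bool) (M : Finset (α × α)) : Prop :=
  (∀ e ∈ M, P e.2 e.1 = true) ∧
  (∀ e ∈ M, ∀ f ∈ M, e.1 = f.1 → e = f) ∧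
  (∀ e ∈ M, ∀ f ∈ M, e.2 = f.2 → e = f)

/-- A maximum matching of `B(P)`. -/
def IsMaxMatching {α : Type*} (P : α → α → Bool) (M : Finset (α × α)) : Prop :=
  IsMatching P M ∧ ∀ M' : Finset (α × α), IsMatching P M' → M'.card ≤ M.card

/-- Vertical stacking of two structured matrices with the same column index set. -/
def stackRows {α β γ : Type*} (P : α → γ → Bool) (Q : β → γ → Bool) :
    α ⊕ β → γ → Bool :=
  fun r c => Sum.elim (fun a => P a c) (fun b => Q b c) r

/-- The unit-pattern row `ē_i`: a `*` at entry `i` and zeros elsewhere. -/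
def unitRow {γ : Type*} [DecidableEq γ] (i : γ) : Unit → γ → Bool :=
  fun _ c => decide (c = i)

/-- `Ī_S`: the structured matrix stacking the unit-pattern rows `ē_i` for `i ∈ S`. -/
def indRows {γ : Type*} [DecidableEq γ] (S : Finset γ) : ↥S → γ → Bool :=
  fun s c => decide (c = (s : γ))


namespace StructAux

set_option linter.unusedSectionVars false
set_option maxHeartbeats 1000000

section HallTheory

variable {α β : Type*}

def Matchable (P : α → β → Bool) (S : Finset β) : Prop :=
  ∃ f : S → α, Function.Injective f ∧ ∀ c : S, P (f c) (c : β) = true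

lemma matchable_empty (P : α → β → Bool) : Matchable P (∅ : Finset β) :=
  ⟨fun c => absurd c.2 (Finset.notMem_empty _), fun c => absurd c.2 (Finset.notMem_empty _),
    fun c => absurd c.2 (Finset.notMem_empty _)⟩

lemma Matchable.mono {P : α → β → Bool} {S T : Finset β} (hTS : T ⊆ S)
    (h : Matchable P S) : Matchable P T := by
  obtain ⟨f, hinj, hf⟩ := h
  refine ⟨fun c => f ⟨c, hTS c.2⟩, fun c d hcd => ?_, fun c => hf _⟩
  have := hinj hcd
  rw [Subtype.mk_eq_mk] at this
  exact Subtype.ext this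

end HallTheory

section Core
variable {α β : Type*} [DecidableEq α] [DecidableEq β] [Fintype α]

/-- The neighborhood (set of rows) of a column. -/
def nbr (P : α → β → Bool) (c : β) : Finset α := Finset.univ.filter (fun r => P r c = true)

omit [DecidableEq β] in
lemma mem_nbr {P : α → β → Bool} {r : α} {c : β} : r ∈ nbr P c ↔ P r c = true := by
  simp [nbr]

/-- Hall characterization of matchability. -/
lemma matchable_iff_hall (P : α → β → Bool) (S : Finset β) :
    Matchable P S ↔ ∀ T ⊆ S, T.card ≤ (T.biUnion (nbr P)).card := by
  rw [show Matchable P S ↔ (∃ f : S → α, Function.Injective f ∧ ∀ c : S, f c ∈ nbr P (c : β))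
    from by simp [Matchable, mem_nbr]]
  rw [← Finset.all_card_le_biUnion_card_iff_exists_injective (fun c : S => nbr P (c : β))]
  constructor
  · intro h T hTS
    have := h (T.attach.map ⟨fun c => (⟨c.1, hTS c.2⟩ : S), by
      intro x y hxy
      rw [Subtype.mk_eq_mk] at hxy
      exact Subtype.ext hxy⟩)
    rw [Finset.card_map, Finset.card_attach] at this
    refine this.trans (Finset.card_le_card ?_)
    intro a ha
    rw [Finset.mem_biUnion] at ha ⊢
    obtain ⟨x, hx, hax⟩ := ha
    rw [Finset.mem_map] at hx
    obtain ⟨c, _, rfl⟩ := hx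
    exact ⟨c.1, c.2, hax⟩
  · intro h s
    have hsub : s.image Subtype.val ⊆ S := by
      intro c hc
      rw [Finset.mem_image] at hc
      obtain ⟨c', _, rfl⟩ := hc
      exact c'.2
    have := h (s.image Subtype.val) hsub
    rw [Finset.card_image_of_injective _ Subtype.val_injective] at this
    refine this.trans (Finset.card_le_card ?_)
    intro a ha
    rw [Finset.mem_biUnion] at ha ⊢
    obtain ⟨c, hc, hx⟩ := ha
    rw [Finset.mem_image] at hc
    obtain ⟨c', hc', rfl⟩ := hc
    exact ⟨c', hc', hx⟩

lemma biUnion_union' (T U : Finset β) (f : β → Finset α) :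
    (T ∪ U).biUnion f = T.biUnion f ∪ U.biUnion f := by
  ext a
  simp only [Finset.mem_biUnion, Finset.mem_union]
  constructor
  · rintro ⟨c, hc | hc, hac⟩
    · exact Or.inl ⟨c, hc, hac⟩
    · exact Or.inr ⟨c, hc, hac⟩
  · rintro (⟨c, hc, hac⟩ | ⟨c, hc, hac⟩)
    · exact ⟨c, Or.inl hc, hac⟩
    · exact ⟨c, Or.inr hc, hac⟩

lemma biUnion_mono' {T U : Finset β} (f : β → Finset α) (h : T ⊆ U) :
    T.biUnion f ⊆ U.biUnion f :=
  Finset.biUnion_subset_biUnion_of_subset_left f h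

/-- Union of two "tight" sets stays tight, given Hall's condition on `S`. -/
lemma tight_union {P : α → β → Bool} {S T U : Finset β}
    (hS : ∀ T ⊆ S, T.card ≤ (T.biUnion (nbr P)).card)
    (hT : T ⊆ S) (hU : U ⊆ S)
    (h1 : (T.biUnion (nbr P)).card ≤ T.card) (h2 : (U.biUnion (nbr P)).card ≤ U.card) :
    ((T ∪ U).biUnion (nbr P)).card ≤ (T ∪ U).card := by
  have e1 : (T ∪ U).biUnion (nbr P) = T.biUnion (nbr P) ∪ U.biUnion (nbr P) :=
    biUnion_union' T U _
  have e2 := Finset.card_union_add_card_inter (T.biUnion (nbr P)) (U.biUnion (nbr P))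
  have e3 : (T ∩ U).biUnion (nbr P) ⊆ T.biUnion (nbr P) ∩ U.biUnion (nbr P) := by
    refine Finset.subset_inter (biUnion_mono' _ Finset.inter_subset_left)
      (biUnion_mono' _ Finset.inter_subset_right)
  have e4 : ((T ∩ U).biUnion (nbr P)).card ≤ (T.biUnion (nbr P) ∩ U.biUnion (nbr P)).card :=
    Finset.card_le_card e3
  have e5 := hS (T ∩ U) (le_trans Finset.inter_subset_left hT)
  have e6 := Finset.card_union_add_card_inter T U
  rw [e1]
  omega

lemma exists_tight {P : α → β → Bool} {S : Finset β}
    (hS : ∀ T ⊆ S, T.card ≤ (T.biUnion (nbr P)).card) {c : β} (hc : c ∉ S)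
    (hnm : ¬Matchable P (insert c S)) :
    ∃ U ⊆ S, (U.biUnion (nbr P)).card ≤ U.card ∧ nbr P c ⊆ U.biUnion (nbr P) := by
  rw [matchable_iff_hall] at hnm
  push_neg at hnm
  obtain ⟨T, hTsub, hTcard⟩ := hnm
  have hcT : c ∈ T := by
    by_contra hcT
    have hTS : T ⊆ S := by
      intro x hx
      rcases Finset.mem_insert.mp (hTsub hx) with h | h
      · exact absurd (h ▸ hx) hcT
      · exact h
    exact absurd (hS T hTS) (not_le.mpr hTcard)
  set U := T.erase c with hUdef
  have hUS : U ⊆ S := by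
    intro x hx
    have hxc := Finset.ne_of_mem_erase hx
    rcases Finset.mem_insert.mp (hTsub (Finset.mem_of_mem_erase hx)) with h | h
    · exact absurd h hxc
    · exact h
  have hTU : T = insert c U := (Finset.insert_erase hcT).symm
  have hcU : c ∉ U := Finset.notMem_erase _ _
  have hcardT : T.card = U.card + 1 := by rw [hTU, Finset.card_insert_of_notMem hcU]
  have hNT : T.biUnion (nbr P) = nbr P c ∪ U.biUnion (nbr P) := by
    rw [hTU, Finset.biUnion_insert]
  have hHU := hS U hUS
  have h1 : (nbr P c ∪ U.biUnion (nbr P)).card ≤ U.card := by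
    have := hTcard; rw [hNT, hcardT] at this; omega
  have hsub2 : U.biUnion (nbr P) ⊆ nbr P c ∪ U.biUnion (nbr P) := Finset.subset_union_right
  have heq : nbr P c ∪ U.biUnion (nbr P) = U.biUnion (nbr P) :=
    (Finset.eq_of_subset_of_card_le hsub2 (h1.trans hHU)).symm
  refine ⟨U, hUS, ?_, ?_⟩
  · rw [← heq]; exact h1
  · rw [← heq]; exact Finset.subset_union_left

/-- Exchange property: a matchable set can be augmented from a larger matchable set. -/
lemma exchange {P : α → β → Bool} {S S' : Finset β}
    (hS : Matchable P S) (hS' : Matchable P S') (hlt : S.card < S'.card) :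
    ∃ c ∈ S', c ∉ S ∧ Matchable P (insert c S) := by
  by_contra hcon
  push_neg at hcon
  rw [matchable_iff_hall] at hS hS'
  -- build a tight set U absorbing all neighborhoods of S' \ S
  have key : ∀ F : Finset β, F ⊆ S' \ S →
      ∃ U ⊆ S, (U.biUnion (nbr P)).card ≤ U.card ∧
        ∀ c ∈ F, nbr P c ⊆ U.biUnion (nbr P) := by
    intro F
    induction F using Finset.induction_on with
    | empty =>
      intro _
      exact ⟨∅, Finset.empty_subset _, by simp, fun c hc => absurd hc (Finset.notMem_empty _)⟩
    | @insert c F hcF ih =>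
      intro hsub
      have hc : c ∈ S' \ S := hsub (Finset.mem_insert_self _ _)
      have hcS' : c ∈ S' := (Finset.mem_sdiff.mp hc).1
      have hcS : c ∉ S := (Finset.mem_sdiff.mp hc).2
      obtain ⟨U, hUS, hUcard, hUnbr⟩ := ih (fun x hx => hsub (Finset.mem_insert_of_mem hx))
      obtain ⟨Uc, hUcS, hUccard, hUcnbr⟩ :=
        exists_tight hS hcS (hcon c hcS' hcS)
      refine ⟨U ∪ Uc, Finset.union_subset hUS hUcS,
        tight_union hS hUS hUcS hUcard hUccard, ?_⟩
      intro d hd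
      have hNsub : U.biUnion (nbr P) ∪ Uc.biUnion (nbr P) ⊆ (U ∪ Uc).biUnion (nbr P) := by
        refine Finset.union_subset
          (Finset.biUnion_subset_biUnion_of_subset_left _ Finset.subset_union_left)
          (Finset.biUnion_subset_biUnion_of_subset_left _ Finset.subset_union_right)
      rcases Finset.mem_insert.mp hd with rfl | hdF
      · exact (hUcnbr.trans (Finset.subset_union_right.trans hNsub))
      · exact ((hUnbr d hdF).trans (Finset.subset_union_left.trans hNsub))
  obtain ⟨U, hUS, hUcard, hUnbr⟩ := key (S' \ S) (Finset.Subset.refl _)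
  -- the contradicting subset of S'
  set T' := (S' \ S) ∪ (U ∩ S') with hT'def
  have hT'S' : T' ⊆ S' :=
    Finset.union_subset (Finset.sdiff_subset) (Finset.inter_subset_right)
  have hNT' : T'.biUnion (nbr P) ⊆ U.biUnion (nbr P) := by
    intro a ha
    rw [Finset.mem_biUnion] at ha
    obtain ⟨d, hd, had⟩ := ha
    rcases Finset.mem_union.mp hd with h | h
    · exact hUnbr d h had
    · rw [Finset.mem_biUnion]
      exact ⟨d, Finset.mem_of_mem_inter_left h, had⟩
  have hTcard := hS' T' hT'S'
  have h2 : (T'.biUnion (nbr P)).card ≤ U.card :=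
    le_trans (Finset.card_le_card hNT') hUcard
  -- now counting
  have hdisj : Disjoint (S' \ S) (U ∩ S') := by
    refine Finset.disjoint_left.mpr ?_
    intro x hx hx2
    exact absurd (hUS (Finset.mem_of_mem_inter_left hx2)) (Finset.mem_sdiff.mp hx).2
  have hc1 : T'.card = (S' \ S).card + (U ∩ S').card := Finset.card_union_of_disjoint hdisj
  have hc2 : (U ∩ S').card + (U \ S').card = U.card := Finset.card_inter_add_card_sdiff U S'
  have hc3 : (U \ S').card ≤ (S \ S').card :=
    Finset.card_le_card (fun x hx => Finset.mem_sdiff.mpr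
      ⟨hUS (Finset.mem_sdiff.mp hx).1, (Finset.mem_sdiff.mp hx).2⟩)
  have hc4 : (S \ S').card + (S ∩ S').card = S.card := Finset.card_sdiff_add_card_inter S S'
  have hc5 : (S' \ S).card + (S' ∩ S).card = S'.card := Finset.card_sdiff_add_card_inter S' S
  have hc6 : (S ∩ S').card = (S' ∩ S).card := by rw [Finset.inter_comm]
  omega


variable [Fintype β]

def mmSet (P : α → β → Bool) : Set ℕ := {k | ∃ S : Finset β, Matchable P S ∧ S.card = k}

noncomputable def mm (P : α → β → Bool) : ℕ := sSup (mmSet P)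

lemma mmSet_nonempty (P : α → β → Bool) : (mmSet P).Nonempty :=
  ⟨0, ∅, matchable_empty P, Finset.card_empty⟩

lemma mmSet_bdd (P : α → β → Bool) : BddAbove (mmSet P) := by
  refine ⟨Fintype.card β, ?_⟩
  rintro k ⟨S, _, rfl⟩
  exact Finset.card_le_card (Finset.subset_univ S) |>.trans_eq (Finset.card_univ)

lemma exists_mm (P : α → β → Bool) : ∃ S : Finset β, Matchable P S ∧ S.card = mm P :=
  Nat.sSup_mem (mmSet_nonempty P) (mmSet_bdd P)

lemma le_mm {P : α → β → Bool} {S : Finset β} (h : Matchable P S) : S.card ≤ mm P :=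
  le_csSup (mmSet_bdd P) ⟨S, h, rfl⟩

lemma mm_le {P : α → β → Bool} {k : ℕ} (h : ∀ S : Finset β, Matchable P S → S.card ≤ k) :
    mm P ≤ k := by
  refine csSup_le (mmSet_nonempty P) ?_
  rintro r ⟨S, hS, rfl⟩
  exact h S hS

/-- Every matchable set extends to a matchable set of the size of any larger matchable set. -/
lemma matchable_extend {P : α → β → Bool} {S S' : Finset β}
    (hS : Matchable P S) (hS' : Matchable P S') (hle : S.card ≤ S'.card) :
    ∃ T : Finset β, S ⊆ T ∧ Matchable P T ∧ T.card = S'.card := by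
  obtain ⟨d, hd⟩ := Nat.exists_eq_add_of_le hle
  clear hle
  induction d generalizing S with
  | zero => exact ⟨S, Finset.Subset.refl _, hS, by omega⟩
  | succ d ih =>
    obtain ⟨c, _, hcS, hins⟩ := exchange hS hS' (by omega)
    obtain ⟨T, hsub, hT, hcard⟩ := ih hins (by
      rw [Finset.card_insert_of_notMem hcS]; omega)
    exact ⟨T, (Finset.subset_insert _ _).trans hsub, hT, hcard⟩

/-- Any matrix has `rank` many linearly independent rows with distinct indices. -/
lemma exists_indep_rows (A : Matrix α β ℝ) :
    ∃ s : Finset α, s.card = A.rank ∧ LinearIndependent ℝ (fun i : s => A i.val) := by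
  have hr := A.rank_eq_finrank_span_row
  obtain ⟨b, hb_sub, hb_span, hb_ind⟩ := exists_linearIndependent ℝ (Set.range A)
  have hbfin : b.Finite := (Set.finite_range A).subset hb_sub
  haveI : Fintype b := hbfin.fintype
  have hcard : Fintype.card b = A.rank := by
    have h1 := linearIndependent_iff_card_eq_finrank_span.mp hb_ind
    rw [Subtype.range_val] at h1
    rw [h1, Set.finrank, hb_span, hr]
    rfl
  have hex : ∀ v : b, ∃ i : α, A i = (v : β → ℝ) := fun v => hb_sub v.2
  choose g hg using hex
  have hginj : Function.Injective g := by
    intro v w h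
    apply Subtype.ext
    rw [← hg v, ← hg w, h]
  refine ⟨Finset.univ.image g, ?_, ?_⟩
  · rw [Finset.card_image_of_injective _ hginj, Finset.card_univ, hcard]
  · have hmem : ∀ i : (Finset.univ.image g : Finset α), A i.val ∈ b := by
      intro i
      obtain ⟨v, _, hv⟩ := Finset.mem_image.mp i.2
      rw [← hv, hg v]
      exact v.2
    have heq : (fun i : (Finset.univ.image g : Finset α) => A i.val) =
        Subtype.val ∘ (fun i => (⟨A i.val, hmem i⟩ : b)) := rfl
    rw [heq]
    refine hb_ind.comp _ ?_
    intro i j hij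
    have h2 : A i.val = A j.val := congrArg Subtype.val hij
    obtain ⟨v, _, hv⟩ := Finset.mem_image.mp i.2
    obtain ⟨w, _, hw⟩ := Finset.mem_image.mp j.2
    apply Subtype.ext
    rw [← hv, ← hw]
    apply congrArg
    apply Subtype.ext
    rw [← hg v, ← hg w, hv, hw, h2]

/-- Any matrix has a generalized diagonal of nonzero entries of length `rank`. -/
lemma rank_witness (A : Matrix α β ℝ) :
    ∃ (f : Fin A.rank → α) (g : Fin A.rank → β),
      Function.Injective f ∧ Function.Injective g ∧ ∀ i, A (f i) (g i) ≠ 0 := by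
  obtain ⟨s, hs, hind⟩ := exists_indep_rows A
  set A1 : Matrix ↥s β ℝ := A.submatrix Subtype.val id with hA1
  have hind1 : LinearIndependent ℝ A1 := hind
  have hrank1 : A1.rank = s.card := by
    exact hind1.rank_matrix.trans (Fintype.card_coe _)
  set A2 : Matrix β ↥s ℝ := A1ᵀ with hA2
  have hrank2 : A2.rank = s.card := by rw [hA2, Matrix.rank_transpose, hrank1]
  obtain ⟨t, ht, hind2⟩ := exists_indep_rows A2
  rw [hrank2] at ht
  set B : Matrix ↥t ↥s ℝ := A2.submatrix Subtype.val id with hB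
  have hindB : LinearIndependent ℝ B := hind2
  have hcards : Fintype.card s = Fintype.card t := by
    rw [Fintype.card_coe, Fintype.card_coe, ht]
  set ε : s ≃ t := Fintype.equivOfCardEq hcards with hε
  set C : Matrix ↥s ↥s ℝ := B.submatrix ε id with hC
  have hindC : LinearIndependent ℝ C := by
    have : C = B ∘ ε := rfl
    rw [this]
    exact hindB.comp ε ε.injective
  have hU : IsUnit C := Matrix.linearIndependent_rows_iff_isUnit.mp hindC
  have hdet : C.det ≠ 0 := ((Matrix.isUnit_iff_isUnit_det C).mp hU).ne_zero
  have hσ : ∃ σ : Equiv.Perm s, ∀ x, C (σ x) x ≠ 0 := by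
    by_contra h
    push_neg at h
    apply hdet
    rw [Matrix.det_apply]
    refine Finset.sum_eq_zero fun σ _ => ?_
    obtain ⟨x, hx⟩ := h σ
    have hz : ∏ i : s, C (σ i) i = 0 :=
      Finset.prod_eq_zero (Finset.mem_univ x) hx
    rw [hz, smul_zero]
  obtain ⟨σ, hσ⟩ := hσ
  have hentry : ∀ x : s, A x.val (ε (σ x)).val ≠ 0 := fun x => hσ x
  set φ : Fin A.rank → s := fun i => s.equivFin.symm (Fin.cast hs.symm i) with hφ
  have hφinj : Function.Injective φ :=
    s.equivFin.symm.injective.comp (Fin.cast_injective _)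
  refine ⟨fun i => (φ i).val, fun i => (ε (σ (φ i))).val, ?_, ?_, fun i => hentry (φ i)⟩
  · exact Subtype.val_injective.comp hφinj
  · exact Subtype.val_injective.comp
      (ε.injective.comp (σ.injective.comp hφinj))

lemma rank_le_mm (P : α → β → Bool) (θ : {ij : α × β // P ij.1 ij.2 = true} → ℝ) :
    (toMat P θ).rank ≤ mm P := by
  set A := toMat P θ with hA
  obtain ⟨f, g, hfinj, hginj, hne⟩ := rank_witness A
  set S : Finset β := Finset.univ.image g with hS
  have hcard : S.card = A.rank := by
    rw [hS, Finset.card_image_of_injective _ hginj, Finset.card_univ, Fintype.card_fin]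
  have hP : ∀ i, P (f i) (g i) = true := by
    intro i
    by_contra hp
    apply hne i
    show (if h : P (f i) (g i) = true then θ ⟨(f i, g i), h⟩ else 0) = 0
    rw [dif_neg hp]
  have hmem : ∀ c : S, ∃ i : Fin A.rank, g i = (c : β) := by
    intro c
    obtain ⟨i, _, hi⟩ := Finset.mem_image.mp c.2
    exact ⟨i, hi⟩
  have hmatch : Matchable P S := by
    refine ⟨fun c => f (Classical.choose (hmem c)), ?_, ?_⟩
    · intro c d hcd
      have hc := Classical.choose_spec (hmem c)
      have hd := Classical.choose_spec (hmem d)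
      have := hfinj hcd
      apply Subtype.ext
      rw [← hc, ← hd, this]
    · intro c
      have hc := Classical.choose_spec (hmem c)
      rw [← hc]
      exact hP _
  calc A.rank = S.card := hcard.symm
    _ ≤ mm P := le_mm hmatch

lemma exists_rank_eq_mm (P : α → β → Bool) :
    ∃ θ, (toMat P θ).rank = mm P := by
  obtain ⟨S, hS, hcard⟩ := exists_mm P
  obtain ⟨f, hinj, hf⟩ := hS
  set θ : {ij : α × β // P ij.1 ij.2 = true} → ℝ :=
    fun ij => if h : ∃ hj : ij.1.2 ∈ S, ij.1.1 = f ⟨ij.1.2, hj⟩ then 1 else 0 with hθ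
  set A := toMat P θ with hA
  have hentry : ∀ i j, A i j = if (∃ hj : j ∈ S, i = f ⟨j, hj⟩) then 1 else 0 := by
    intro i j
    show (if h : P i j = true then θ ⟨(i, j), h⟩ else 0) = _
    by_cases hp : P i j = true
    · rw [dif_pos hp, hθ]
      simp only
      split <;> rfl
    · rw [dif_neg hp]
      rw [if_neg]
      rintro ⟨hj, rfl⟩
      exact hp (hf ⟨j, hj⟩)
  refine ⟨θ, le_antisymm (rank_le_mm P θ) ?_⟩
  -- lower bound: L * A * R = 1 on S
  set L : Matrix S α ℝ := Matrix.of (fun c i => if i = f c then 1 else 0) with hL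
  set R : Matrix β S ℝ := Matrix.of (fun j c => if j = (c : β) then 1 else 0) with hR
  have hLAR : L * A * R = (1 : Matrix S S ℝ) := by
    ext c d
    rw [Matrix.mul_apply]
    have h1 : ∀ j, (L * A) c j * R j d = if j = (d : β) then (L * A) c j else 0 := by
      intro j
      show (L * A) c j * (if j = (d : β) then 1 else 0) = _
      split <;> simp
    rw [Finset.sum_congr rfl (fun j _ => h1 j), Finset.sum_ite_eq' Finset.univ (d : β),
      if_pos (Finset.mem_univ _)]
    rw [Matrix.mul_apply]
    have h2 : ∀ i, L c i * A i (d : β) = if i = f c then A i (d : β) else 0 := by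
      intro i
      show (if i = f c then 1 else 0) * A i (d : β) = _
      split <;> simp
    rw [Finset.sum_congr rfl (fun i _ => h2 i), Finset.sum_ite_eq' Finset.univ (f c),
      if_pos (Finset.mem_univ _)]
    rw [hentry]
    by_cases hcd : c = d
    · rw [if_pos ⟨d.2, by rw [hcd]⟩, hcd,
        Matrix.one_apply_eq]
    · have hcond : ¬∃ hj : (d : β) ∈ S, f c = f ⟨(d : β), hj⟩ := by
        rintro ⟨hj, hfe⟩
        exact hcd (hinj (hfe.trans (congrArg f (Subtype.ext rfl))))
      rw [if_neg hcond, Matrix.one_apply_ne hcd]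
  have hrank1 : (L * A * R).rank = S.card := by
    rw [hLAR, Matrix.rank_one, Fintype.card_coe]
  have hle1 : (L * A * R).rank ≤ (L * A).rank := Matrix.rank_mul_le_left _ _
  have hle2 : (L * A).rank ≤ A.rank := Matrix.rank_mul_le_right _ _
  have hAA : A.rank = (toMat P θ).rank := rfl
  omega

theorem grank_eq_mm (P : α → β → Bool) : grank P = mm P := by
  apply IsGreatest.csSup_eq
  constructor
  · exact exists_rank_eq_mm P
  · rintro r ⟨θ, rfl⟩
    exact rank_le_mm P θ


end Core

section Conversions
variable {n : ℕ}

/-- From an edge-set matching to a matchable column set. -/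
lemma IsMatching.matchable {P : Fin n → Fin n → Bool} {M : Finset (Fin n × Fin n)}
    (h : IsMatching P M) :
    Matchable P (M.image Prod.fst) ∧ (M.image Prod.fst).card = M.card := by
  obtain ⟨hP, hfst, hsnd⟩ := h
  have hex : ∀ c : (M.image Prod.fst : Finset (Fin n)), ∃ e, e ∈ M ∧ e.1 = (c : Fin n) := by
    intro c
    obtain ⟨e, he, hec⟩ := Finset.mem_image.mp c.2
    exact ⟨e, he, hec⟩
  constructor
  · refine ⟨fun c => (Classical.choose (hex c)).2, ?_, ?_⟩
    · intro c d hcd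
      obtain ⟨he, he1⟩ := Classical.choose_spec (hex c)
      obtain ⟨hf, hf1⟩ := Classical.choose_spec (hex d)
      have := hsnd _ he _ hf hcd
      apply Subtype.ext
      rw [← he1, ← hf1, this]
    · intro c
      obtain ⟨he, he1⟩ := Classical.choose_spec (hex c)
      rw [← he1]
      exact hP _ he
  · apply Finset.card_image_of_injOn
    intro e he f hf hef
    exact hfst e he f hf hef

/-- From a matchable column set to an edge-set matching. -/
lemma Matchable.toMatching {P : Fin n → Fin n → Bool} {S : Finset (Fin n)}
    (h : Matchable P S) :
    ∃ M : Finset (Fin n × Fin n), IsMatching P M ∧ M.card = S.card ∧ M.image Prod.fst = S := by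
  obtain ⟨f, hinj, hf⟩ := h
  refine ⟨S.attach.image (fun c : {x // x ∈ S} => (c.val, f c)), ⟨?_, ?_, ?_⟩, ?_, ?_⟩
  · intro e he
    obtain ⟨c, _, rfl⟩ := Finset.mem_image.mp he
    exact hf c
  · intro e he g hg heg
    obtain ⟨c, _, rfl⟩ := Finset.mem_image.mp he
    obtain ⟨d, _, rfl⟩ := Finset.mem_image.mp hg
    dsimp only at heg
    have : c = d := Subtype.ext heg
    rw [this]
  · intro e he g hg heg
    obtain ⟨c, _, rfl⟩ := Finset.mem_image.mp he
    obtain ⟨d, _, rfl⟩ := Finset.mem_image.mp hg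
    dsimp only at heg
    have : c = d := hinj heg
    rw [this]
  · rw [Finset.card_image_of_injOn, Finset.card_attach]
    intro c _ d _ hcd
    exact Subtype.ext (congrArg Prod.fst hcd)
  · ext c
    simp only [Finset.mem_image, Finset.mem_attach, true_and, Subtype.exists]
    constructor
    · rintro ⟨e, ⟨d, hd, hde⟩, rfl⟩
      rw [← hde]
      exact hd
    · intro hc
      exact ⟨(c, f ⟨c, hc⟩), ⟨c, hc, rfl⟩, rfl⟩

section Stacked
variable {n : ℕ} (P : Fin n → Fin n → Bool) (XF : Finset (Fin n))

/-- The pattern restricted to columns outside `XF`. -/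
def resPat : Fin n → Fin n → Bool := fun r c => P r c && decide (c ∉ XF)

lemma resPat_matchable {S : Finset (Fin n)} (h : Matchable (resPat P XF) S) :
    Matchable P S ∧ ∀ c ∈ S, c ∉ XF := by
  obtain ⟨f, hinj, hf⟩ := h
  have h2 : ∀ c : S, P (f c) (c : Fin n) = true ∧ (c : Fin n) ∉ XF := by
    intro c
    have := hf c
    rw [resPat, Bool.and_eq_true, decide_eq_true_eq] at this
    exact this
  exact ⟨⟨f, hinj, fun c => (h2 c).1⟩, fun c hc => (h2 ⟨c, hc⟩).2⟩

lemma matchable_resPat {S : Finset (Fin n)} (h1 : Matchable P S) (h2 : ∀ c ∈ S, c ∉ XF) :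
    Matchable (resPat P XF) S := by
  obtain ⟨f, hinj, hf⟩ := h1
  refine ⟨f, hinj, fun c => ?_⟩
  rw [resPat, Bool.and_eq_true, decide_eq_true_eq]
  exact ⟨hf c, h2 c c.2⟩

lemma mm_resPat_le : mm (resPat P XF) ≤ mm P := by
  refine mm_le fun S hS => le_mm (resPat_matchable P XF hS).1

lemma mm_le_mm_resPat_add : mm P ≤ XF.card + mm (resPat P XF) := by
  refine mm_le fun S hS => ?_
  have h1 : Matchable (resPat P XF) (S \ XF) := by
    refine matchable_resPat P XF (hS.mono Finset.sdiff_subset) ?_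
    intro c hc
    exact (Finset.mem_sdiff.mp hc).2
  have h2 : (S \ XF).card ≤ mm (resPat P XF) := le_mm h1
  have h3 := Finset.card_inter_add_card_sdiff S XF
  have h4 : (S ∩ XF).card ≤ XF.card := Finset.card_le_card Finset.inter_subset_right
  omega

/-- The maximum matching size of the stacked pattern. -/
lemma mm_stacked : mm (stackRows P (indRows XF)) = XF.card + mm (resPat P XF) := by
  classical
  apply le_antisymm
  · refine mm_le fun S hS => ?_
    obtain ⟨f, hinj, hf⟩ := hS
    set S1 : Finset (Fin n) := S.filter (fun c => ∀ h : c ∈ S, (f ⟨c, h⟩).isLeft) with hS1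
    have hS1S : S1 ⊆ S := Finset.filter_subset _ _
    set S2 : Finset (Fin n) := S \ S1 with hS2
    have hS2XF : S2 ⊆ XF := by
      intro c hc
      obtain ⟨hcS, hcn⟩ := Finset.mem_sdiff.mp hc
      have hnl : ¬(f ⟨c, hcS⟩).isLeft := by
        intro hl
        exact hcn (Finset.mem_filter.mpr ⟨hcS, fun h => by
          have : (⟨c, h⟩ : {x // x ∈ S}) = ⟨c, hcS⟩ := Subtype.ext rfl
          rw [this]; exact hl⟩)
      obtain ⟨b, hb⟩ : ∃ b, f ⟨c, hcS⟩ = Sum.inr b := by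
        rcases hfc : f ⟨c, hcS⟩ with a | b
        · exact absurd (by rw [hfc]; rfl) hnl
        · exact ⟨b, rfl⟩
      have h3 := hf ⟨c, hcS⟩
      rw [hb] at h3
      simp only [stackRows, Sum.elim_inr, indRows, decide_eq_true_eq] at h3
      rw [show c = (b : Fin n) from h3]
      exact b.2
    -- S1 \ XF is resPat-matchable
    have hleft : ∀ c : (S1 \ XF : Finset (Fin n)),
        ∃ a, f ⟨(c : Fin n), hS1S (Finset.mem_sdiff.mp c.2).1⟩ = Sum.inl a := by
      intro c
      have hc1 : (c : Fin n) ∈ S1 := (Finset.mem_sdiff.mp c.2).1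
      have hl := (Finset.mem_filter.mp hc1).2 (hS1S hc1)
      have heq : (⟨(c : Fin n), hS1S hc1⟩ : {x // x ∈ S}) =
          ⟨(c : Fin n), hS1S (Finset.mem_sdiff.mp c.2).1⟩ := Subtype.ext rfl
      rw [heq] at hl
      rcases hfc : f ⟨(c : Fin n), hS1S (Finset.mem_sdiff.mp c.2).1⟩ with a | b
      · exact ⟨a, rfl⟩
      · rw [hfc] at hl; exact absurd hl (by simp)
    choose g hg using hleft
    have hmatch : Matchable (resPat P XF) (S1 \ XF) := by
      refine ⟨g, ?_, ?_⟩
      · intro c d hcd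
        have h5 : f ⟨(c : Fin n), hS1S (Finset.mem_sdiff.mp c.2).1⟩ =
            f ⟨(d : Fin n), hS1S (Finset.mem_sdiff.mp d.2).1⟩ := by
          rw [hg c, hg d, hcd]
        have h2 := hinj h5
        rw [Subtype.mk_eq_mk] at h2
        exact Subtype.ext h2
      · intro c
        have h3 := hf ⟨(c : Fin n), hS1S (Finset.mem_sdiff.mp c.2).1⟩
        rw [hg c] at h3
        simp only [stackRows, Sum.elim_inl] at h3
        simp only [resPat, Bool.and_eq_true, decide_eq_true_eq]
        exact ⟨h3, (Finset.mem_sdiff.mp c.2).2⟩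
    have h1 : (S1 \ XF).card ≤ mm (resPat P XF) := le_mm hmatch
    have h2 : (S1 ∩ XF).card + (S1 \ XF).card = S1.card :=
      Finset.card_inter_add_card_sdiff S1 XF
    have h3 : S2.card + S1.card = S.card := Finset.card_sdiff_add_card_eq_card hS1S
    have h4 : (S1 ∩ XF).card + S2.card ≤ XF.card := by
      have hdisj : Disjoint (S1 ∩ XF) S2 := by
        refine Finset.disjoint_left.mpr fun x hx hx2 => ?_
        exact (Finset.mem_sdiff.mp hx2).2 (Finset.mem_of_mem_inter_left hx)
      have hsub : (S1 ∩ XF) ∪ S2 ⊆ XF :=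
        Finset.union_subset Finset.inter_subset_right hS2XF
      calc (S1 ∩ XF).card + S2.card = ((S1 ∩ XF) ∪ S2).card :=
            (Finset.card_union_of_disjoint hdisj).symm
        _ ≤ XF.card := Finset.card_le_card hsub
    omega
  · obtain ⟨S0, hS0, hcard0⟩ := exists_mm (resPat P XF)
    obtain ⟨hS0P, hS0XF⟩ := resPat_matchable P XF hS0
    obtain ⟨f0, hf0inj, hf0⟩ := hS0P
    set S : Finset (Fin n) := S0 ∪ XF with hS
    have hcard : S.card = XF.card + mm (resPat P XF) := by
      rw [hS, Finset.card_union_of_disjoint (Finset.disjoint_left.mpr hS0XF), hcard0]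
      omega
    have hmem2 : ∀ c : {x // x ∈ S}, (c : Fin n) ∉ S0 → (c : Fin n) ∈ XF := by
      intro c h
      exact (Finset.mem_union.mp c.2).resolve_left h
    have hmatch : Matchable (stackRows P (indRows XF)) S := by
      refine ⟨fun c => if h : (c : Fin n) ∈ S0 then Sum.inl (f0 ⟨c, h⟩) else
        Sum.inr ⟨c, hmem2 c h⟩, ?_, ?_⟩
      · intro c d hcd
        dsimp only at hcd
        by_cases hc : (c : Fin n) ∈ S0 <;> by_cases hd : (d : Fin n) ∈ S0
        · rw [dif_pos hc, dif_pos hd] at hcd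
          have := hf0inj (Sum.inl_injective hcd)
          rw [Subtype.mk_eq_mk] at this
          exact Subtype.ext this
        · rw [dif_pos hc, dif_neg hd] at hcd; exact absurd hcd (by simp)
        · rw [dif_neg hc, dif_pos hd] at hcd; exact absurd hcd (by simp)
        · rw [dif_neg hc, dif_neg hd] at hcd
          have := Sum.inr_injective hcd
          rw [Subtype.mk_eq_mk] at this
          exact Subtype.ext this
      · intro c
        dsimp only
        by_cases hc : (c : Fin n) ∈ S0
        · rw [dif_pos hc]
          exact hf0 ⟨c, hc⟩
        · rw [dif_neg hc]
          simp [stackRows, indRows]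
    calc XF.card + mm (resPat P XF) = S.card := hcard.symm
      _ ≤ mm (stackRows P (indRows XF)) := le_mm hmatch

end Stacked

end Conversions
end StructAux

open StructAux in
/-- grank[Ā; Ī_{X_F}] − grank Ā equals the maximum, over all maximum
matchings M of B(Ā), of the number of vertices of X_F that are right-unmatched by M
(i.e. not the initial, column-side endpoint of any edge of M). -/
theorem grank_diff_eq_max_right_unmatched
    {n : ℕ} (P : Fin n → Fin n → Bool) (XF : Finset (Fin n)) :
    grank (stackRows P (indRows XF)) - grank P =
      sSup {k | ∃ M : Finset (Fin n × Fin n), IsMaxMatching P M ∧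
        (XF.filter (fun i => ∀ e ∈ M, e.1 ≠ i)).card = k} := by
  have hg1 : grank P = mm P := grank_eq_mm P
  have hg2 : grank (stackRows P (indRows XF)) = XF.card + mm (resPat P XF) := by
    rw [grank_eq_mm, mm_stacked]
  have hm1le : mm P ≤ XF.card + mm (resPat P XF) := mm_le_mm_resPat_add P XF
  -- construct a maximum matching containing a maximum XF-avoiding matching
  obtain ⟨S0, hS0, hc0⟩ := exists_mm (resPat P XF)
  obtain ⟨hS0P, hS0XF⟩ := resPat_matchable P XF hS0
  obtain ⟨S1, hS1, hc1⟩ := exists_mm P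
  have hm0le : S0.card ≤ S1.card := by
    rw [hc0, hc1]; exact mm_resPat_le P XF
  obtain ⟨T, hsub, hT, hcT⟩ := matchable_extend hS0P hS1 hm0le
  obtain ⟨M, hM, hMcard, hMim⟩ := Matchable.toMatching hT
  have hTcard : T.card = mm P := by rw [hcT, hc1]
  have hMmax : IsMaxMatching P M := by
    refine ⟨hM, fun M' hM' => ?_⟩
    obtain ⟨hmat, hcd⟩ := IsMatching.matchable hM'
    calc M'.card = (M'.image Prod.fst).card := hcd.symm
      _ ≤ mm P := le_mm hmat
      _ = M.card := by rw [hMcard, hTcard]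
  have hcount : ∀ M' : Finset (Fin n × Fin n),
      XF.filter (fun i => ∀ e ∈ M', e.1 ≠ i) = XF \ (M'.image Prod.fst) := by
    intro M'
    ext i
    simp only [Finset.mem_filter, Finset.mem_sdiff, Finset.mem_image]
    constructor
    · rintro ⟨hi, h⟩
      refine ⟨hi, ?_⟩
      rintro ⟨e, he, hei⟩
      exact h e he hei
    · rintro ⟨hi, h⟩
      refine ⟨hi, fun e he hei => h ⟨e, he, hei⟩⟩
  have hvM : (XF.filter (fun i => ∀ e ∈ M, e.1 ≠ i)).card = (XF \ T).card := by
    rw [hcount, hMim]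
  have hlow : (XF ∩ T).card + mm (resPat P XF) ≤ mm P := by
    have hdisj : Disjoint (XF ∩ T) S0 := by
      refine Finset.disjoint_left.mpr fun x hx hx2 => ?_
      exact hS0XF x hx2 (Finset.mem_of_mem_inter_left hx)
    have hsub2 : (XF ∩ T) ∪ S0 ⊆ T :=
      Finset.union_subset Finset.inter_subset_right hsub
    have := Finset.card_le_card hsub2
    rw [Finset.card_union_of_disjoint hdisj, hc0] at this
    omega
  have hkey1 : (XF \ T).card + (XF ∩ T).card = XF.card :=
    Finset.card_sdiff_add_card_inter XF T
  have hupper : ∀ M', IsMaxMatching P M' →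
      (XF.filter (fun i => ∀ e ∈ M', e.1 ≠ i)).card + mm P
        ≤ XF.card + mm (resPat P XF) := by
    intro M' hM'
    obtain ⟨hmat, hcd⟩ := IsMatching.matchable hM'.1
    set S' := M'.image Prod.fst with hS'
    have hS'card : S'.card = mm P := by
      refine le_antisymm (le_mm hmat) ?_
      have h2 := hM'.2 M hM
      rw [hMcard, hTcard] at h2
      omega
    have h5 : Matchable (resPat P XF) (S' \ XF) := by
      refine matchable_resPat P XF (hmat.mono Finset.sdiff_subset) ?_
      exact fun c hc => (Finset.mem_sdiff.mp hc).2
    have h6 : (S' \ XF).card ≤ mm (resPat P XF) := le_mm h5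
    have h7 : (S' ∩ XF).card + (S' \ XF).card = S'.card :=
      Finset.card_inter_add_card_sdiff S' XF
    have h8 : (XF \ S').card + (XF ∩ S').card = XF.card :=
      Finset.card_sdiff_add_card_inter XF S'
    have h9 : (XF ∩ S').card = (S' ∩ XF).card := by rw [Finset.inter_comm]
    rw [hcount M', ← hS']
    omega
  have hvEq : (XF \ T).card + mm P = XF.card + mm (resPat P XF) := by
    have h10 := hupper M hMmax
    rw [hvM] at h10
    omega
  have hsup : sSup {k | ∃ M' : Finset (Fin n × Fin n), IsMaxMatching P M' ∧
      (XF.filter (fun i => ∀ e ∈ M', e.1 ≠ i)).card = k} = (XF \ T).card := by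
    apply IsGreatest.csSup_eq
    constructor
    · exact ⟨M, hMmax, hvM⟩
    · rintro k ⟨M', hM', rfl⟩
      have := hupper M' hM'
      omega
  rw [hg1, hg2, hsup]
  omega
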